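/- Let α, β, N be real numbers and, for each integer j ≥ 0, define Z_j(s) = h_j^{−α,β,−β−2−N}(−s−1). Then for every real s and every integer j ≥ 0: (s+1)(N−s) Z_j(s+1) + ((s+α+1)(s−N) + s(s−β−N−1)) Z_j(s) + (β+N+1−s)(α+s) Z_j(s−1) = (α−j)(j+β+1) Z_j(s). (This is the recurrence (relaR) for the dual Hahn recurrence coefficients a_n = n(n+α), b_n = −(n+α+1)(n−N) − n(n−β−N−1), c_n = (n−β−N−1)(n−N−1), with ε_n = (N−n+1)/(α+n) and eigenvalue −λ^{α,β}(j−α), where λ^{α,β}(x) = x(x+α+β+1); the coefficients have been cleared of denominators, using ε_{n+1} a_{n+1} = (n+1)(N−n) and c_n/ε_n = (β+N+1−n)(α+n).) -/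
import Mathlib


open Polynomial Finset

noncomputable section

/-- Pochhammer symbol `(a)_k = a(a+1)⋯(a+k−1)`. -/
def poch (a : ℝ) (k : ℕ) : ℝ := ∏ i ∈ Finset.range k, (a + i)

/-- The quadratic lattice `λ^{α,β}(x) = x(x+α+β+1)`. -/
def lam (α β x : ℝ) : ℝ := x * (x + α + β + 1)

/-- The dual Hahn polynomial `R_n^{α,β,N}`. -/
def dualHahn (α β N : ℝ) (n : ℕ) : Polynomial ℝ :=
  Polynomial.C ((n.factorial : ℝ))⁻¹ *
    ∑ j ∈ Finset.range (n + 1),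
      Polynomial.C ((-1 : ℝ) ^ j * poch (-(n : ℝ)) j * poch (-N + j) (n - j)
          / (poch (α + 1) j * (j.factorial : ℝ))) *
        ∏ i ∈ Finset.range j, (Polynomial.X - Polynomial.C ((i : ℝ) * (α + β + 1 + i)))

/-- Dual Hahn polynomial with integer index; `R_k = 0` for `k < 0`. -/
def dualHahnZ (α β N : ℝ) (k : ℤ) : Polynomial ℝ :=
  if 0 ≤ k then dualHahn α β N k.toNat else 0

/-- The Hahn polynomial `h_n^{α,β,N}` evaluated at `x`. -/
def hahn (α β N : ℝ) (n : ℕ) (x : ℝ) : ℝ :=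
  ∑ j ∈ Finset.range (n + 1),
    poch (-(n : ℝ)) j * poch ((n : ℝ) + α + β + 1) j * poch (-N + j) (n - j) *
      poch (α + j + 1) (n - j) * poch (-x) j / (j.factorial : ℝ)

/-- The dual Hahn weight `w_{*;α,β,N}(x)`. -/
def dualHahnWeight (α β : ℝ) (N : ℕ) (x : ℕ) : ℝ :=
  (2 * (x : ℝ) + α + β + 1) * poch (α + 1) x * poch (-(N : ℝ)) x * (N.factorial : ℝ) /
    ((-1 : ℝ) ^ x * poch ((x : ℝ) + α + β + 1) (N + 1) * poch (β + 1) x * (x.factorial : ℝ))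

lemma poch_succ (a : ℝ) (k : ℕ) : poch a (k + 1) = poch a k * (a + k) :=
  Finset.prod_range_succ _ _

lemma poch_succ' (a : ℝ) (k : ℕ) : poch a (k + 1) = a * poch (a + 1) k := by
  unfold poch
  rw [Finset.prod_range_succ']
  rw [Finset.prod_congr rfl (fun i (_ : i ∈ Finset.range k) =>
    show (a + (↑(i + 1) : ℝ)) = (a + 1) + (i : ℝ) from by push_cast; ring)]
  push_cast
  ring

/-- Per-term difference identity for the Hahn sum. -/
lemma hahn_W (α β N : ℝ) (n : ℕ) (x : ℝ) (k : ℕ) :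
    (-x) * (N + x + 1) * poch (-(x - 1)) k
      + ((α - x) * (-x - 1 - N) + (-x - 1) * (-x - β - N - 2)
          - (α - (n : ℝ)) * ((n : ℝ) + β + 1)) * poch (-x) k
      + (β + N + 2 + x) * (α - x - 1) * poch (-(x + 1)) k
    = ((n : ℝ) - (k : ℝ)) * ((n : ℝ) + (k : ℝ) + β + 1 - α) * poch (-x) k
      - (k : ℝ) * ((β + N + 2 + ((k : ℝ) - 1)) * (α - ((k : ℝ) - 1) - 1)) *
          poch (-x) (k - 1) := by
  cases k with
  | zero => simp [poch]; ring
  | succ k =>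
    rw [show (-(x - 1) : ℝ) = -x + 1 from by ring, show (-(x + 1) : ℝ) = -x - 1 from by ring]
    rw [poch_succ (-x + 1) k, poch_succ' (-x - 1) k,
      show (-x - 1 + 1 : ℝ) = -x from by ring, poch_succ' (-x) k, Nat.add_sub_cancel]
    have hQR : (-x) * poch (-x + 1) k = poch (-x) k * (-x + k) := by
      rw [← poch_succ', ← poch_succ]
    push_cast
    linear_combination ((N + x + 1) * (-x + 1 + (k : ℝ))
      + ((α - x) * (-x - 1 - N) + (-x - 1) * (-x - β - N - 2))
      - (α - (n : ℝ)) * ((n : ℝ) + β + 1)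
      - ((n : ℝ) - ((k : ℝ) + 1)) * ((n : ℝ) + ((k : ℝ) + 1) + β + 1 - α)) * hQR

lemma hahn_key (α β N : ℝ) (n : ℕ) (x : ℝ) :
    (-x) * (N + x + 1) * hahn (-α) β (-β - 2 - N) n (x - 1) +
      ((α - x) * (-x - 1 - N) + (-x - 1) * (-x - β - N - 2)) * hahn (-α) β (-β - 2 - N) n x +
      (β + N + 2 + x) * (α - x - 1) * hahn (-α) β (-β - 2 - N) n (x + 1) =
      (α - (n : ℝ)) * ((n : ℝ) + β + 1) * hahn (-α) β (-β - 2 - N) n x := by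
  rw [← sub_eq_zero]
  unfold hahn
  rw [Finset.mul_sum, Finset.mul_sum, Finset.mul_sum, Finset.mul_sum,
    ← Finset.sum_add_distrib, ← Finset.sum_add_distrib, ← Finset.sum_sub_distrib]
  have hsplit : (∑ k ∈ Finset.range (n + 1),
      (((n : ℝ) - (k : ℝ)) * ((n : ℝ) + (k : ℝ) + β + 1 - α) *
        (poch (-(n : ℝ)) k * poch ((n : ℝ) + -α + β + 1) k *
          poch (-(-β - 2 - N) + (k : ℝ)) (n - k) * poch (-α + (k : ℝ) + 1) (n - k) *
          poch (-x) k / (k.factorial : ℝ))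
       - (k : ℝ) * ((β + N + 2 + ((k : ℝ) - 1)) * (α - ((k : ℝ) - 1) - 1)) *
        (poch (-(n : ℝ)) k * poch ((n : ℝ) + -α + β + 1) k *
          poch (-(-β - 2 - N) + (k : ℝ)) (n - k) * poch (-α + (k : ℝ) + 1) (n - k) *
          poch (-x) (k - 1) / (k.factorial : ℝ)))) = 0 := by
    rw [Finset.sum_sub_distrib, Finset.sum_range_succ, Finset.sum_range_succ']
    simp only [sub_self, zero_mul, mul_zero, Nat.cast_zero, add_zero]
    rw [sub_eq_zero]
    refine Finset.sum_congr rfl fun r hr => ?_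
    have hr' : r < n := Finset.mem_range.mp hr
    have hfac : ((r.factorial : ℝ)) ≠ 0 := Nat.cast_ne_zero.mpr (Nat.factorial_ne_zero r)
    have hr1 : ((r : ℝ) + 1) ≠ 0 := by positivity
    rw [Nat.add_sub_cancel, Nat.factorial_succ]
    push_cast
    rw [show n - r = (n - (r + 1)) + 1 from by omega]
    rw [poch_succ (-(n : ℝ)) r, poch_succ ((n : ℝ) + -α + β + 1) r,
      poch_succ' (-(-β - 2 - N) + (r : ℝ)) (n - (r + 1)),
      poch_succ' (-α + (r : ℝ) + 1) (n - (r + 1)),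
      show (-(-β - 2 - N) + ((r : ℝ) + 1) : ℝ) = -(-β - 2 - N) + (r : ℝ) + 1 from by ring,
      show (-α + ((r : ℝ) + 1) + 1 : ℝ) = -α + (r : ℝ) + 1 + 1 from by ring]
    field_simp
    ring
  refine Eq.trans (Finset.sum_congr rfl fun k hk => ?_) hsplit
  linear_combination (poch (-(n : ℝ)) k * poch ((n : ℝ) + -α + β + 1) k *
      poch (-(-β - 2 - N) + (k : ℝ)) (n - k) * poch (-α + (k : ℝ) + 1) (n - k) /
      (k.factorial : ℝ)) * hahn_W α β N n x k

/-- The Hahn polynomials `Z_j(s) = h_j^{−α,β,−β−2−N}(−s−1)` satisfy the recurrence (relaR)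
for the dual Hahn recurrence coefficients with `ε_n = (N−n+1)/(α+n)` and eigenvalue
`−λ^{α,β}(j−α)`, with denominators cleared. -/
theorem hahn_rec_three (α β N : ℝ) (j : ℕ) (s : ℝ) :
    (s + 1) * (N - s) * hahn (-α) β (-β - 2 - N) j (-(s + 1) - 1) +
      ((s + α + 1) * (s - N) + s * (s - β - N - 1)) * hahn (-α) β (-β - 2 - N) j (-s - 1) +
      (β + N + 1 - s) * (α + s) * hahn (-α) β (-β - 2 - N) j (-(s - 1) - 1) =
    (α - j) * (j + β + 1) * hahn (-α) β (-β - 2 - N) j (-s - 1) := by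
  have key := hahn_key α β N j (-s - 1)
  have e1 : -(s + 1) - 1 = -s - 1 - 1 := by ring
  have e2 : -(s - 1) - 1 = -s - 1 + 1 := by ring
  rw [e1, e2]
  linear_combination key

end
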